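/- For any greedy run ℓ_1, …, ℓ_m on a 2NC-TAP instance and any feasible solution x of the partition LP (P) (i.e., x_ℓ ≥ 0 for all ℓ ∈ L and Σ_{ℓ ∈ L crossing 𝒫} x_ℓ ≥ |𝒫| − 1 for every non-leaf node u of T and every 𝒫 ∈ Ptn⊇(comps(T−u))), the total cost of the picked links satisfies Σ_{i=1}^{m} cost(ℓ_i) ≤ H(λ−1) · Σ_{ℓ ∈ L} cost(ℓ)·x_ℓ. In particular, the cost of the set of links returned by the greedy algorithm is at most H(λ−1) times the optimal value of (P). -/

import Mathlib

open scoped Classical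
open Finset

namespace TwoNCTAP

variable {V : Type*}

/-- The graph `H` with the vertex `u` "deleted": all edges incident to `u` are removed,
so that `u` becomes an isolated vertex. -/
def delVert (H : SimpleGraph V) (u : V) : SimpleGraph V where
  Adj a b := H.Adj a b ∧ a ≠ u ∧ b ≠ u
  symm := ⟨by rintro a b ⟨h, ha, hb⟩; exact ⟨h.symm, hb, ha⟩⟩
  loopless := ⟨by rintro a ⟨h, -, -⟩; exact H.irrefl h⟩

/-- The partition of `V ∖ {u}` into the vertex sets of the connected components of `H − u`. -/
def compPartition (H : SimpleGraph V) (u : V) : Set (Set V) :=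
  {S | ∃ v, v ≠ u ∧ S = {w | (delVert H u).Reachable v w}}

/-- `P` is a partition of the set `S`. -/
def IsPartitionOf (P : Set (Set V)) (S : Set V) : Prop :=
  (∀ B ∈ P, B.Nonempty) ∧ (∀ B ∈ P, B ⊆ S) ∧ ∀ v ∈ S, ∃! B : Set V, B ∈ P ∧ v ∈ B

/-- `P ∈ Ptn⊇(comps(T−u))`: `P` is a partition of `V ∖ {u}` each of whose blocks is a
union of vertex sets of connected components of `T − u`. -/
def PtnSup (T : SimpleGraph V) (u : V) (P : Set (Set V)) : Prop :=
  IsPartitionOf P {v | v ≠ u} ∧ ∀ B ∈ compPartition T u, ∃ C ∈ P, B ⊆ C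

/-- An edge `e` crosses the partition `P` if its two endpoints lie in different blocks of `P`. -/
def Crosses (P : Set (Set V)) (e : Sym2 V) : Prop :=
  ∃ v w, e = s(v, w) ∧ ∃ B ∈ P, ∃ C ∈ P, B ≠ C ∧ v ∈ B ∧ w ∈ C

/-- `u` is a non-leaf node of `T`. -/
def NonLeaf (T : SimpleGraph V) (u : V) : Prop := 1 < (T.neighborSet u).ncard

/-- The links of the instance: the edges of `G` that are not edges of the tree `T`. -/
def links (G T : SimpleGraph V) : Set (Sym2 V) := G.edgeSet \ T.edgeSet

variable [Fintype V]

/-- Feasibility for the partition LP (P) of the 2NC-TAP instance `(G, T, cost)`. -/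
def FeasibleP (G T : SimpleGraph V) (x : Sym2 V → ℝ) : Prop :=
  (∀ ℓ ∈ links G T, 0 ≤ x ℓ) ∧
  ∀ u : V, NonLeaf T u → ∀ P : Set (Set V), PtnSup T u P →
    (P.ncard : ℝ) - 1 ≤
      ∑ ℓ ∈ Finset.univ.filter (fun ℓ : Sym2 V => ℓ ∈ links G T ∧ Crosses P ℓ), x ℓ


/-- The tree `T` together with a set `F` of links added as edges. -/
def withLinks (T : SimpleGraph V) (F : Set (Sym2 V)) : SimpleGraph V :=
  T ⊔ SimpleGraph.fromEdgeSet F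

/-- The current partition `𝒫^i_u` (0-indexed): the partition of `V ∖ {u}` into the vertex
sets of the connected components of `(T ∪ {ℓ_0, …, ℓ_{i−1}}) − u`. -/
def curPtn {m : ℕ} (T : SimpleGraph V) (ℓseq : Fin m → Sym2 V) (i : ℕ) (u : V) :
    Set (Set V) :=
  compPartition (withLinks T {e | ∃ j : Fin m, (j : ℕ) < i ∧ ℓseq j = e}) u

/-- `inc^i(e)`: the set of non-leaf nodes `u` of `T` whose current partition (at the start
of iteration `i`, 0-indexed) is crossed by the link `e`. -/
def incSet {m : ℕ} (T : SimpleGraph V) (ℓseq : Fin m → Sym2 V) (i : ℕ)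
    (e : Sym2 V) : Set V :=
  {u | NonLeaf T u ∧ Crosses (curPtn T ℓseq i u) e}

/-- A greedy run on the 2NC-TAP instance `(G, T, cost)`: a sequence of distinct links
`ℓ_0, …, ℓ_{m−1}` such that each `ℓ_i` minimizes the cost-coverage ratio at iteration `i`,
and at the end every current partition is trivial (i.e. `T` plus the picked links
is 2-node-connected). -/
def IsGreedyRun (G T : SimpleGraph V) (cost : Sym2 V → ℝ) (m : ℕ)
    (ℓseq : Fin m → Sym2 V) : Prop :=
  Function.Injective ℓseq ∧
  (∀ i, ℓseq i ∈ links G T) ∧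
  (∀ i : Fin m,
    (incSet T ℓseq (i : ℕ) (ℓseq i)).Nonempty ∧
    ∀ e ∈ links G T, (incSet T ℓseq (i : ℕ) e).Nonempty →
      cost (ℓseq i) / ((incSet T ℓseq (i : ℕ) (ℓseq i)).ncard : ℝ)
        ≤ cost e / ((incSet T ℓseq (i : ℕ) e).ncard : ℝ)) ∧
  ∀ u : V, NonLeaf T u → curPtn T ℓseq m u = {{v | v ≠ u}}

/-- `ν(u)`: the number of connected components of `T − u`. -/
noncomputable def nblocks (T : SimpleGraph V) (u : V) : ℕ := (compPartition T u).ncard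


/-- The `k`-th harmonic number `H(k) = 1 + 1/2 + ⋯ + 1/k`. -/
noncomputable def harm (k : ℕ) : ℝ := ∑ i ∈ Finset.range k, (1 : ℝ) / (i + 1)

end TwoNCTAP

/-!
Charging argument. Let `r i = cost ℓ_i / |inc^i(ℓ_i)|` be the ratio paid at step `i`; the greedy
rule makes `r` nondecreasing, because coverages only shrink. Picking `ℓ_i` merges at least two
blocks of `𝒫^i_u` for every `u ∈ inc^i(ℓ_i)`, so it lowers the deficiency
`D i = ∑_u (|𝒫^i_u| - 1)` by at least `|inc^i(ℓ_i)|`, whence `cost ℓ_i ≤ r i * (D i - D (i + 1))`.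
Feasibility of `x` gives `D i ≤ B i := ∑_ℓ x ℓ * |inc^i(ℓ)|`, and since `D m = B m = 0`,
summation by parts turns this into `∑ r i * (D i - D (i + 1)) ≤ ∑ r i * (B i - B (i + 1))`.
Regrouping the right side by links, `ℓ` is charged `∑ r i * (|inc^i(ℓ)| - |inc^(i+1)(ℓ)|)`, which
is at most `cost ℓ * H(|inc^0(ℓ)|)` since `r i ≤ cost ℓ / |inc^i(ℓ)|` while `ℓ` still crosses
something. Finally `|inc^0(ℓ)| ≤ λ - 1`: a node separating the ends of `ℓ` in `T` is an inner
node of the tree path `T(ℓ)`.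
-/

namespace TwoNCTAP

section Components

variable {V : Type*} {H H' : SimpleGraph V} {u v w : V}

def block (H : SimpleGraph V) (u v : V) : Set V := {w | (delVert H u).Reachable v w}

lemma mem_block_self (H : SimpleGraph V) (u v : V) : v ∈ block H u v :=
  SimpleGraph.Reachable.refl v

lemma block_mem_compPartition (hv : v ≠ u) : block H u v ∈ compPartition H u := ⟨v, hv, rfl⟩

lemma block_eq_block_iff : block H u v = block H u w ↔ (delVert H u).Reachable v w := by
  refine ⟨fun h => ?_, fun h => ?_⟩
  · have hw := mem_block_self H u w
    rwa [← h] at hw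
  · ext z
    exact ⟨fun hz => h.symm.trans hz, fun hz => h.trans hz⟩

lemma delVert_mono (h : H ≤ H') : delVert H u ≤ delVert H' u :=
  fun _ _ hab => ⟨h hab.1, hab.2⟩

lemma ne_of_reachable_delVert (h : (delVert H u).Reachable v w) (hv : v ≠ u) : w ≠ u := by
  rintro rfl
  obtain ⟨p⟩ := h.symm
  cases p with
  | nil => exact hv rfl
  | cons hadj _ => exact hadj.2.1 rfl

lemma eq_block_of_mem {S : Set V} (hS : S ∈ compPartition H u) (hv : v ∈ S) :
    S = block H u v := by
  obtain ⟨v', _, rfl⟩ := hS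
  exact block_eq_block_iff.2 hv

lemma ne_of_mem_of_mem_compPartition {S : Set V} (hS : S ∈ compPartition H u) (hv : v ∈ S) :
    v ≠ u := by
  obtain ⟨v', hv', rfl⟩ := hS
  exact ne_of_reachable_delVert hv hv'

lemma compPartition_isPartitionOf (H : SimpleGraph V) (u : V) :
    IsPartitionOf (compPartition H u) {v | v ≠ u} := by
  refine ⟨?_, fun B hB w hw => ne_of_mem_of_mem_compPartition hB hw, fun v hv => ?_⟩
  · rintro B ⟨v, -, rfl⟩
    exact ⟨v, mem_block_self H u v⟩
  · exact ⟨block H u v, ⟨block_mem_compPartition hv, mem_block_self H u v⟩,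
      fun B ⟨hB, hvB⟩ => eq_block_of_mem hB hvB⟩

lemma crosses_compPartition_iff :
    Crosses (compPartition H u) s(v, w) ↔
      v ≠ u ∧ w ≠ u ∧ ¬ (delVert H u).Reachable v w := by
  constructor
  · rintro ⟨v', w', heq, B, hB, C, hC, hBC, hvB, hwC⟩
    have key : ∀ a b : V, a ∈ B → b ∈ C → a ≠ u ∧ b ≠ u ∧ ¬ (delVert H u).Reachable a b :=
      fun a b ha hb => ⟨ne_of_mem_of_mem_compPartition hB ha,
        ne_of_mem_of_mem_compPartition hC hb, fun hr => hBC (by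
          rw [eq_block_of_mem hB ha, eq_block_of_mem hC hb, block_eq_block_iff.2 hr])⟩
    rcases Sym2.eq_iff.1 heq with ⟨rfl, rfl⟩ | ⟨rfl, rfl⟩
    · exact key v w hvB hwC
    · obtain ⟨h1, h2, h3⟩ := key w v hvB hwC
      exact ⟨h2, h1, fun hr => h3 hr.symm⟩
  · rintro ⟨hv, hw, hr⟩
    exact ⟨v, w, rfl, block H u v, block_mem_compPartition hv, block H u w,
      block_mem_compPartition hw, mt block_eq_block_iff.1 hr, mem_block_self H u v,
      mem_block_self H u w⟩

lemma crosses_compPartition_of_le (h : H ≤ H') {e : Sym2 V}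
    (hc : Crosses (compPartition H' u) e) : Crosses (compPartition H u) e := by
  obtain ⟨v, w, rfl, -⟩ := id hc
  rw [crosses_compPartition_iff] at hc ⊢
  exact ⟨hc.1, hc.2.1, fun hr => hc.2.2 (hr.mono (delVert_mono h))⟩

lemma not_crosses_singleton (S : Set V) (e : Sym2 V) : ¬ Crosses {S} e := by
  rintro ⟨-, -, -, B, hB, C, hC, hBC, -⟩
  exact hBC (hB.trans hC.symm)

/-- The block of `H' - u` containing a block `S` of `H - u`, when `H ≤ H'`. -/
def coarsen (H' : SimpleGraph V) (u : V) (S : Set V) : Set V :=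
  {w | ∃ x ∈ S, (delVert H' u).Reachable x w}

lemma coarsen_block (h : H ≤ H') (v : V) : coarsen H' u (block H u v) = block H' u v := by
  ext w
  refine ⟨fun ⟨x, hx, hr⟩ => ?_, fun hw => ⟨v, mem_block_self H u v, hw⟩⟩
  exact ((hx : (delVert H u).Reachable v x).mono (delVert_mono h)).trans hr

lemma compPartition_eq_image_coarsen (h : H ≤ H') :
    compPartition H' u = coarsen H' u '' compPartition H u := by
  ext S
  constructor
  · rintro ⟨v, hv, rfl⟩
    exact ⟨block H u v, block_mem_compPartition hv, coarsen_block h v⟩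
  · rintro ⟨-, ⟨v, hv, rfl⟩, rfl⟩
    exact (coarsen_block h v).symm ▸ block_mem_compPartition hv

variable [Finite V]

lemma ncard_compPartition_le_of_le (h : H ≤ H') :
    (compPartition H' u).ncard ≤ (compPartition H u).ncard := by
  rw [compPartition_eq_image_coarsen h]
  exact Set.ncard_image_le

lemma ncard_compPartition_lt_of_le (h : H ≤ H') (hv : v ≠ u) (hw : w ≠ u)
    (hnr : ¬ (delVert H u).Reachable v w) (hr' : (delVert H' u).Reachable v w) :
    (compPartition H' u).ncard < (compPartition H u).ncard := by
  have hvw : block H u v ≠ block H u w := mt block_eq_block_iff.1 hnr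
  have himage : compPartition H' u ⊆ coarsen H' u '' (compPartition H u \ {block H u v}) := by
    rw [compPartition_eq_image_coarsen h]
    rintro - ⟨S, hS, rfl⟩
    by_cases hSv : S = block H u v
    · subst hSv
      refine ⟨block H u w, ⟨block_mem_compPartition hw, hvw.symm⟩, ?_⟩
      rw [coarsen_block h, coarsen_block h, block_eq_block_iff.2 hr']
    · exact ⟨S, ⟨hS, hSv⟩, rfl⟩
  calc (compPartition H' u).ncard
      ≤ (compPartition H u \ {block H u v}).ncard :=
        (Set.ncard_le_ncard himage).trans Set.ncard_image_le
    _ < (compPartition H u).ncard :=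
        Set.ncard_sdiff_singleton_lt_of_mem (block_mem_compPartition hv)

end Components

section Separators

variable {V : Type*} {H : SimpleGraph V} {u v w : V}

lemma mem_support_of_not_reachable_delVert (p : H.Walk v w)
    (h : ¬ (delVert H u).Reachable v w) : u ∈ p.support := by
  by_contra hu
  refine h (p.transfer (delVert H u) fun e he => ?_).reachable
  induction e using Sym2.inductionOn with
  | hf a b =>
    exact ⟨p.adj_of_mem_edges he, fun ha => hu (ha ▸ p.fst_mem_support_of_mem_edges he),
      fun hb => hu (hb ▸ p.snd_mem_support_of_mem_edges he)⟩

/-- Every vertex separating `v` from `w` is an inner vertex of a shortest `v`-`w` walk. -/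
lemma ncard_setOf_crosses_le_dist (hr : H.Reachable v w) (hvw : v ≠ w) :
    {u | Crosses (compPartition H u) s(v, w)}.ncard ≤ H.dist v w - 1 := by
  obtain ⟨p, hp⟩ := hr.exists_walk_length_eq_dist
  have hsub : {u | Crosses (compPartition H u) s(v, w)} ⊆ ↑(p.support.toFinset \ {v, w}) := by
    intro u hu
    obtain ⟨hv, hw, hnr⟩ := crosses_compPartition_iff.1 hu
    simp only [Finset.coe_sdiff, Finset.coe_insert, Finset.coe_singleton, List.coe_toFinset]
    exact ⟨mem_support_of_not_reachable_delVert p hnr, by rintro (rfl | rfl) <;> simp_all⟩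
  have hends : {v, w} ⊆ p.support.toFinset := by
    simp [Finset.insert_subset_iff, p.start_mem_support, p.end_mem_support]
  calc {u | Crosses (compPartition H u) s(v, w)}.ncard
      ≤ (p.support.toFinset \ {v, w}).card :=
        (Set.ncard_le_ncard hsub).trans (Set.ncard_coe_finset _).le
    _ = p.support.toFinset.card - 2 := by rw [Finset.card_sdiff_of_subset hends, card_pair hvw]
    _ ≤ p.support.length - 2 := Nat.sub_le_sub_right (List.toFinset_card_le _) 2
    _ = H.dist v w - 1 := by rw [p.length_support, hp]; omega

end Separators

section Runs

variable {V : Type*} {m : ℕ} {G T : SimpleGraph V} {ℓseq : Fin m → Sym2 V} {i i' : ℕ} {u : V}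

def runGraph (T : SimpleGraph V) (ℓseq : Fin m → Sym2 V) (i : ℕ) : SimpleGraph V :=
  withLinks T {e | ∃ j : Fin m, (j : ℕ) < i ∧ ℓseq j = e}

lemma curPtn_eq_compPartition_runGraph :
    curPtn T ℓseq i u = compPartition (runGraph T ℓseq i) u := rfl

lemma le_runGraph (i : ℕ) : T ≤ runGraph T ℓseq i := le_sup_left

lemma runGraph_mono (h : i ≤ i') : runGraph T ℓseq i ≤ runGraph T ℓseq i' := by
  refine sup_le_sup_left (SimpleGraph.fromEdgeSet_mono ?_) T
  rintro e ⟨j, hj, rfl⟩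
  exact ⟨j, hj.trans_le h, rfl⟩

lemma runGraph_zero : runGraph T ℓseq 0 = T := by
  simp [runGraph, withLinks]

lemma incSet_anti (h : i ≤ i') (e : Sym2 V) : incSet T ℓseq i' e ⊆ incSet T ℓseq i e :=
  fun _ ⟨hu, hc⟩ => ⟨hu, crosses_compPartition_of_le (runGraph_mono h) hc⟩

lemma incSet_zero_subset (e : Sym2 V) :
    incSet T ℓseq 0 e ⊆ {u | Crosses (compPartition T u) e} := by
  rintro u ⟨-, hc⟩
  rwa [curPtn_eq_compPartition_runGraph, runGraph_zero] at hc

lemma ptnSup_curPtn (i : ℕ) (u : V) : PtnSup T u (curPtn T ℓseq i u) := by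
  refine ⟨compPartition_isPartitionOf _ u, ?_⟩
  rintro - ⟨v, hv, rfl⟩
  exact ⟨block (runGraph T ℓseq i) u v, block_mem_compPartition hv,
    fun w hw => (hw : (delVert T u).Reachable v w).mono (delVert_mono (le_runGraph i))⟩

lemma IsGreedyRun.incSet_final {cost : Sym2 V → ℝ} (hrun : IsGreedyRun G T cost m ℓseq)
    (e : Sym2 V) : incSet T ℓseq m e = ∅ :=
  Set.eq_empty_of_forall_notMem fun u ⟨hu, hc⟩ => by
    rw [hrun.2.2.2 u hu] at hc
    exact not_crosses_singleton _ _ hc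

variable [Finite V]

lemma ncard_curPtn_le (h : i ≤ i') (u : V) :
    (curPtn T ℓseq i' u).ncard ≤ (curPtn T ℓseq i u).ncard :=
  ncard_compPartition_le_of_le (runGraph_mono h)

lemma ncard_curPtn_succ_lt {j : Fin m} (hc : Crosses (curPtn T ℓseq j u) (ℓseq j)) :
    (curPtn T ℓseq (j + 1) u).ncard < (curPtn T ℓseq j u).ncard := by
  obtain ⟨v, w, heq, -⟩ := id hc
  rw [heq, curPtn_eq_compPartition_runGraph, crosses_compPartition_iff] at hc
  obtain ⟨hv, hw, hnr⟩ := hc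
  have hvw : v ≠ w := fun h => hnr (h ▸ SimpleGraph.Reachable.refl v)
  have hadj : (delVert (runGraph T ℓseq (j + 1)) u).Adj v w :=
    ⟨Or.inr ((SimpleGraph.fromEdgeSet_adj _).2 ⟨⟨j, Nat.lt_succ_self _, heq⟩, hvw⟩), hv, hw⟩
  exact ncard_compPartition_lt_of_le (runGraph_mono (Nat.le_succ _)) hv hw hnr hadj.reachable

lemma ncard_incSet_zero_le {lam : ℕ} (hT : T.Connected)
    (hlam : IsGreatest {d : ℕ | ∃ v w : V, s(v, w) ∈ links G T ∧ d = T.dist v w} lam)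
    {e : Sym2 V} (he : e ∈ links G T) : (incSet T ℓseq 0 e).ncard ≤ lam - 1 := by
  induction e using Sym2.inductionOn with
  | hf v w =>
    calc (incSet T ℓseq 0 s(v, w)).ncard
        ≤ {u | Crosses (compPartition T u) s(v, w)}.ncard :=
          Set.ncard_le_ncard (incSet_zero_subset _)
      _ ≤ T.dist v w - 1 := ncard_setOf_crosses_le_dist (hT.preconnected v w) he.1.ne
      _ ≤ lam - 1 := Nat.sub_le_sub_right (hlam.2 ⟨v, w, he, rfl⟩) 1

end Runs

section Potentials

variable {V : Type*} [Fintype V] {m : ℕ} {G T : SimpleGraph V} {ℓseq : Fin m → Sym2 V}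

noncomputable def deficiency (T : SimpleGraph V) (ℓseq : Fin m → Sym2 V) (i : ℕ) : ℝ :=
  ∑ u ∈ Finset.univ.filter (fun u => NonLeaf T u), (((curPtn T ℓseq i u).ncard : ℝ) - 1)

noncomputable def coverage (G T : SimpleGraph V) (ℓseq : Fin m → Sym2 V) (x : Sym2 V → ℝ)
    (i : ℕ) : ℝ :=
  ∑ ℓ ∈ Finset.univ.filter (fun ℓ : Sym2 V => ℓ ∈ links G T),
    x ℓ * ((incSet T ℓseq i ℓ).ncard : ℝ)

lemma ncard_incSet_eq_sum (i : ℕ) (e : Sym2 V) :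
    ((incSet T ℓseq i e).ncard : ℝ) =
      ∑ u ∈ Finset.univ.filter (fun u => NonLeaf T u),
        if Crosses (curPtn T ℓseq i u) e then (1 : ℝ) else 0 := by
  have h : incSet T ℓseq i e =
      ↑(Finset.univ.filter fun u : V => NonLeaf T u ∧ Crosses (curPtn T ℓseq i u) e) := by
    ext u
    simp [incSet]
  rw [h, Set.ncard_coe_finset, Finset.sum_boole, Finset.filter_filter]

/-- Each `𝒫^i_u` lies in `Ptn⊇(comps(T−u))`; sum the LP constraints of these partitions. -/
lemma deficiency_le_coverage {x : Sym2 V → ℝ} (hx : FeasibleP G T x) (i : ℕ) :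
    deficiency T ℓseq i ≤ coverage G T ℓseq x i := by
  calc deficiency T ℓseq i
      ≤ ∑ u ∈ Finset.univ.filter (fun u => NonLeaf T u),
          ∑ ℓ ∈ Finset.univ.filter (fun ℓ : Sym2 V => ℓ ∈ links G T),
            if Crosses (curPtn T ℓseq i u) ℓ then x ℓ else 0 := by
        refine Finset.sum_le_sum fun u hu => ?_
        rw [← Finset.sum_filter, Finset.filter_filter]
        exact hx.2 u (Finset.mem_filter.1 hu).2 _ (ptnSup_curPtn i u)
    _ = coverage G T ℓseq x i := by
        rw [Finset.sum_comm]
        refine Finset.sum_congr rfl fun ℓ _ => ?_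
        rw [ncard_incSet_eq_sum, Finset.mul_sum]
        exact Finset.sum_congr rfl fun u _ => by split_ifs <;> simp

lemma ncard_incSet_le_deficiency_sub (j : Fin m) :
    ((incSet T ℓseq j (ℓseq j)).ncard : ℝ) ≤ deficiency T ℓseq j - deficiency T ℓseq (j + 1) := by
  rw [ncard_incSet_eq_sum, deficiency, deficiency, ← Finset.sum_sub_distrib]
  refine Finset.sum_le_sum fun u _ => ?_
  split_ifs with hc
  · have hlt : ((curPtn T ℓseq (j + 1) u).ncard : ℝ) + 1 ≤ (curPtn T ℓseq j u).ncard := by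
      exact_mod_cast ncard_curPtn_succ_lt hc
    linarith
  · have hle : ((curPtn T ℓseq (j + 1) u).ncard : ℝ) ≤ (curPtn T ℓseq j u).ncard := by
      exact_mod_cast ncard_curPtn_le (Nat.le_succ _) u
    linarith

variable {cost : Sym2 V → ℝ}

lemma IsGreedyRun.deficiency_final (hrun : IsGreedyRun G T cost m ℓseq) :
    deficiency T ℓseq m = 0 :=
  Finset.sum_eq_zero fun u hu => by
    rw [hrun.2.2.2 u (Finset.mem_filter.1 hu).2, Set.ncard_singleton]
    norm_num

lemma IsGreedyRun.coverage_final (hrun : IsGreedyRun G T cost m ℓseq) (x : Sym2 V → ℝ) :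
    coverage G T ℓseq x m = 0 :=
  Finset.sum_eq_zero fun ℓ _ => by simp [hrun.incSet_final ℓ]

end Potentials

section Summation

lemma harm_nonneg (k : ℕ) : 0 ≤ harm k :=
  Finset.sum_nonneg fun _ _ => by positivity

lemma harm_mono {k l : ℕ} (h : k ≤ l) : harm k ≤ harm l :=
  Finset.sum_le_sum_of_subset_of_nonneg (Finset.range_subset_range.2 h) fun _ _ _ => by positivity

lemma div_le_harm_sub_harm {a b : ℕ} (h : b ≤ a) : ((a : ℝ) - b) / a ≤ harm a - harm b := by
  rw [harm, harm, ← Finset.sum_Ico_eq_sub _ h]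
  calc ((a : ℝ) - b) / a = (Finset.Ico b a).card • ((1 : ℝ) / a) := by
        rw [Nat.card_Ico, nsmul_eq_mul, Nat.cast_sub h]
        ring
    _ ≤ ∑ i ∈ Finset.Ico b a, (1 : ℝ) / (i + 1) := by
        refine Finset.card_nsmul_le_sum _ _ _ fun i hi => ?_
        refine one_div_le_one_div_of_le (by positivity) ?_
        exact_mod_cast (Finset.mem_Ico.1 hi).2

/-- Summation by parts: with `C m = 0`, the sum equals `r 0 * C 0` plus the terms
`(r (i + 1) - r i) * C (i + 1)`, which are nonnegative. -/
lemma mul_le_sum_range_mul_sub_succ {r C : ℕ → ℝ} {m : ℕ} (hr : ∀ i, i + 1 < m → r i ≤ r (i + 1))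
    (hC : ∀ i < m, 0 ≤ C i) (hCm : C m = 0) :
    r 0 * C 0 ≤ ∑ i ∈ Finset.range m, r i * (C i - C (i + 1)) := by
  induction m generalizing r C with
  | zero => simp [hCm]
  | succ m ih =>
    have htail := ih (r := fun i => r (i + 1)) (C := fun i => C (i + 1))
      (fun i hi => hr (i + 1) (by omega)) (fun i hi => hC (i + 1) (by omega)) hCm
    rw [Finset.sum_range_succ']
    rcases Nat.eq_zero_or_pos m with rfl | hm
    · simp [hCm]
    · nlinarith [hr 0 (by omega), hC 1 (by omega)]

lemma sum_range_mul_sub_succ_le {r A B : ℕ → ℝ} {m : ℕ} (hr0 : 0 ≤ r 0)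
    (hr : ∀ i, i + 1 < m → r i ≤ r (i + 1)) (hAB : ∀ i < m, A i ≤ B i) (hm : A m = B m) :
    ∑ i ∈ Finset.range m, r i * (A i - A (i + 1)) ≤
      ∑ i ∈ Finset.range m, r i * (B i - B (i + 1)) := by
  have h := mul_le_sum_range_mul_sub_succ (C := fun i => B i - A i) hr
    (fun i hi => sub_nonneg.2 (hAB i hi)) (sub_eq_zero.2 hm.symm)
  have hC0 : 0 ≤ r 0 * (B 0 - A 0) := by
    rcases Nat.eq_zero_or_pos m with rfl | hm0
    · simp [hm]
    · exact mul_nonneg hr0 (sub_nonneg.2 (hAB 0 hm0))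
  rw [← sub_nonneg, ← Finset.sum_sub_distrib]
  calc (0 : ℝ) ≤ _ := hC0.trans h
    _ = _ := Finset.sum_congr rfl fun i _ => by ring

/-- Each term is at most `c * (n i - n (i + 1)) / n i ≤ c * (H(n i) - H(n (i + 1)))`, and these
telescope. -/
lemma sum_range_mul_sub_succ_le_mul_harm {r : ℕ → ℝ} {n : ℕ → ℕ} {c : ℝ} {m : ℕ} (hc : 0 ≤ c)
    (hn : ∀ i, n (i + 1) ≤ n i) (hr : ∀ i < m, 0 < n i → r i ≤ c / n i) :
    ∑ i ∈ Finset.range m, r i * ((n i : ℝ) - n (i + 1)) ≤ c * harm (n 0) := by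
  have hstep : ∀ i ∈ Finset.range m,
      r i * ((n i : ℝ) - n (i + 1)) ≤ c * (harm (n i) - harm (n (i + 1))) := by
    intro i hi
    rcases (hn i).eq_or_lt with heq | hlt
    · simp [heq]
    · have hΔ : (0 : ℝ) ≤ (n i : ℝ) - n (i + 1) := sub_nonneg.2 (by exact_mod_cast hn i)
      calc r i * ((n i : ℝ) - n (i + 1)) ≤ c / n i * ((n i : ℝ) - n (i + 1)) :=
            mul_le_mul_of_nonneg_right (hr i (Finset.mem_range.1 hi) (by omega)) hΔ
        _ = c * (((n i : ℝ) - n (i + 1)) / n i) := by ring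
        _ ≤ c * (harm (n i) - harm (n (i + 1))) :=
            mul_le_mul_of_nonneg_left (div_le_harm_sub_harm (hn i)) hc
  calc ∑ i ∈ Finset.range m, r i * ((n i : ℝ) - n (i + 1))
      ≤ ∑ i ∈ Finset.range m, c * (harm (n i) - harm (n (i + 1))) := Finset.sum_le_sum hstep
    _ = c * (harm (n 0) - harm (n m)) := by
        rw [← Finset.mul_sum, Finset.sum_range_sub' (fun i => harm (n i))]
    _ ≤ c * harm (n 0) := by nlinarith [harm_nonneg (n m)]

end Summation

section Greedy

variable {V : Type*} {m : ℕ} {G T : SimpleGraph V} {cost : Sym2 V → ℝ} {ℓseq : Fin m → Sym2 V}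

noncomputable def pickRatio (T : SimpleGraph V) (cost : Sym2 V → ℝ) (ℓseq : Fin m → Sym2 V)
    (i : ℕ) : ℝ :=
  if h : i < m then cost (ℓseq ⟨i, h⟩) / (incSet T ℓseq i (ℓseq ⟨i, h⟩)).ncard else 0

lemma pickRatio_fin (j : Fin m) :
    pickRatio T cost ℓseq j = cost (ℓseq j) / (incSet T ℓseq j (ℓseq j)).ncard :=
  dif_pos j.isLt

namespace IsGreedyRun

variable (hrun : IsGreedyRun G T cost m ℓseq)
include hrun

lemma pickRatio_nonneg (hcost : ∀ e ∈ links G T, 0 ≤ cost e) (i : ℕ) :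
    0 ≤ pickRatio T cost ℓseq i := by
  unfold pickRatio
  split_ifs
  · exact div_nonneg (hcost _ (hrun.2.1 _)) (Nat.cast_nonneg _)
  · exact le_rfl

lemma pickRatio_le {i : ℕ} (hi : i < m) {e : Sym2 V} (he : e ∈ links G T)
    (hne : (incSet T ℓseq i e).Nonempty) :
    pickRatio T cost ℓseq i ≤ cost e / (incSet T ℓseq i e).ncard :=
  (pickRatio_fin ⟨i, hi⟩).trans_le ((hrun.2.2.1 ⟨i, hi⟩).2 e he hne)

/-- The greedy choice at step `i` could have taken `ℓ_{i+1}`, whose coverage only shrinks. -/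
lemma pickRatio_le_succ [Finite V] (hcost : ∀ e ∈ links G T, 0 ≤ cost e) {i : ℕ} (hi : i + 1 < m) :
    pickRatio T cost ℓseq i ≤ pickRatio T cost ℓseq (i + 1) := by
  set j : Fin m := ⟨i + 1, hi⟩
  have hne : (incSet T ℓseq (i + 1) (ℓseq j)).Nonempty := (hrun.2.2.1 j).1
  have hpos : (0 : ℝ) < (incSet T ℓseq (i + 1) (ℓseq j)).ncard := by
    exact_mod_cast (Set.ncard_pos (Set.toFinite _)).2 hne
  calc pickRatio T cost ℓseq i
      ≤ cost (ℓseq j) / (incSet T ℓseq i (ℓseq j)).ncard :=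
        hrun.pickRatio_le (by omega) (hrun.2.1 j) (hne.mono (incSet_anti (Nat.le_succ i) _))
    _ ≤ cost (ℓseq j) / (incSet T ℓseq (i + 1) (ℓseq j)).ncard :=
        div_le_div_of_nonneg_left (hcost _ (hrun.2.1 j)) hpos
          (by exact_mod_cast Set.ncard_le_ncard (incSet_anti (Nat.le_succ i) _))
    _ = pickRatio T cost ℓseq (i + 1) := (pickRatio_fin j).symm

lemma sum_cost_le [Fintype V] (hcost : ∀ e ∈ links G T, 0 ≤ cost e) :
    ∑ i : Fin m, cost (ℓseq i) ≤
      ∑ i ∈ Finset.range m,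
        pickRatio T cost ℓseq i * (deficiency T ℓseq i - deficiency T ℓseq (i + 1)) := by
  rw [← Fin.sum_univ_eq_sum_range]
  refine Finset.sum_le_sum fun j _ => ?_
  have hpos : (0 : ℝ) < (incSet T ℓseq j (ℓseq j)).ncard := by
    exact_mod_cast (Set.ncard_pos (Set.toFinite _)).2 (hrun.2.2.1 j).1
  calc cost (ℓseq j) = pickRatio T cost ℓseq j * (incSet T ℓseq j (ℓseq j)).ncard := by
        rw [pickRatio_fin, div_mul_cancel₀ _ hpos.ne']
    _ ≤ pickRatio T cost ℓseq j * (deficiency T ℓseq j - deficiency T ℓseq (j + 1)) :=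
        mul_le_mul_of_nonneg_left (ncard_incSet_le_deficiency_sub j)
          (hrun.pickRatio_nonneg hcost j)

lemma sum_pickRatio_mul_coverage_sub_le [Fintype V] (hcost : ∀ e ∈ links G T, 0 ≤ cost e)
    (hT : T.Connected) {lam : ℕ}
    (hlam : IsGreatest {d : ℕ | ∃ v w : V, s(v, w) ∈ links G T ∧ d = T.dist v w} lam)
    {x : Sym2 V → ℝ} (hx : ∀ ℓ ∈ links G T, 0 ≤ x ℓ) :
    ∑ i ∈ Finset.range m,
        pickRatio T cost ℓseq i * (coverage G T ℓseq x i - coverage G T ℓseq x (i + 1)) ≤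
      harm (lam - 1) *
        ∑ ℓ ∈ Finset.univ.filter (fun ℓ : Sym2 V => ℓ ∈ links G T), cost ℓ * x ℓ := by
  simp only [coverage, ← Finset.sum_sub_distrib, Finset.mul_sum]
  rw [Finset.sum_comm]
  refine Finset.sum_le_sum fun ℓ hℓ => ?_
  have hℓ : ℓ ∈ links G T := (Finset.mem_filter.1 hℓ).2
  have hcharge := sum_range_mul_sub_succ_le_mul_harm (r := pickRatio T cost ℓseq) (m := m)
    (hcost ℓ hℓ) (fun i => Set.ncard_le_ncard (incSet_anti (Nat.le_succ i) ℓ))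
    (fun i hi hpos => hrun.pickRatio_le hi hℓ ((Set.ncard_pos (Set.toFinite _)).1 hpos))
  calc ∑ i ∈ Finset.range m, pickRatio T cost ℓseq i *
        (x ℓ * (incSet T ℓseq i ℓ).ncard - x ℓ * (incSet T ℓseq (i + 1) ℓ).ncard)
      = x ℓ * ∑ i ∈ Finset.range m, pickRatio T cost ℓseq i *
          (((incSet T ℓseq i ℓ).ncard : ℝ) - (incSet T ℓseq (i + 1) ℓ).ncard) := by
        rw [Finset.mul_sum]
        exact Finset.sum_congr rfl fun i _ => by ring
    _ ≤ x ℓ * (cost ℓ * harm (lam - 1)) := by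
        refine mul_le_mul_of_nonneg_left (hcharge.trans ?_) (hx ℓ hℓ)
        exact mul_le_mul_of_nonneg_left (harm_mono (ncard_incSet_zero_le hT hlam hℓ))
          (hcost ℓ hℓ)
    _ = harm (lam - 1) * (cost ℓ * x ℓ) := by ring

end IsGreedyRun

end Greedy

variable {V : Type*} [Fintype V]

theorem greedy_cost_le_harmonic_times_LP_general
    (G T : SimpleGraph V) (hT : T.IsTree)
    (cost : Sym2 V → ℝ) (hcost : ∀ e ∈ links G T, 0 ≤ cost e)
    (lam : ℕ)
    (hlam : IsGreatest {d : ℕ | ∃ v w : V, s(v, w) ∈ links G T ∧ d = T.dist v w} lam)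
    (m : ℕ) (ℓseq : Fin m → Sym2 V) (hrun : IsGreedyRun G T cost m ℓseq)
    (x : Sym2 V → ℝ) (hx : FeasibleP G T x) :
    ∑ i : Fin m, cost (ℓseq i)
      ≤ harm (lam - 1) *
        ∑ ℓ ∈ Finset.univ.filter (fun ℓ : Sym2 V => ℓ ∈ links G T), cost ℓ * x ℓ := by
  calc ∑ i : Fin m, cost (ℓseq i)
      ≤ ∑ i ∈ Finset.range m,
          pickRatio T cost ℓseq i * (deficiency T ℓseq i - deficiency T ℓseq (i + 1)) :=
        hrun.sum_cost_le hcost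
    _ ≤ ∑ i ∈ Finset.range m,
          pickRatio T cost ℓseq i * (coverage G T ℓseq x i - coverage G T ℓseq x (i + 1)) :=
        sum_range_mul_sub_succ_le (hrun.pickRatio_nonneg hcost 0)
          (fun _ => hrun.pickRatio_le_succ hcost) (fun i _ => deficiency_le_coverage hx i)
          (by rw [hrun.deficiency_final, hrun.coverage_final])
    _ ≤ _ := hrun.sum_pickRatio_mul_coverage_sub_le hcost hT.connected hlam hx.1

/-- For any greedy run `ℓ_1, …, ℓ_m` on a 2NC-TAP instance and any
feasible solution `x` of the partition LP (P), the total cost of the picked links is at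
most `H(λ−1)` times the objective value of `x`; in particular, the greedy algorithm is an
`H(λ−1)`-approximation relative to the optimum of (P). Here `λ` is the maximum number of
edges of a tree path `T(ℓ)` over all links `ℓ`. -/
theorem greedy_cost_le_harmonic_times_LP
    (G T : SimpleGraph V) (hV : 3 ≤ Fintype.card V) (hTG : T ≤ G) (hT : T.IsTree)
    (cost : Sym2 V → ℝ) (hcost : ∀ e ∈ links G T, 0 ≤ cost e)
    (lam : ℕ)
    (hlam : IsGreatest {d : ℕ | ∃ v w : V, s(v, w) ∈ links G T ∧ d = T.dist v w} lam)
    (m : ℕ) (ℓseq : Fin m → Sym2 V) (hrun : IsGreedyRun G T cost m ℓseq)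
    (x : Sym2 V → ℝ) (hx : FeasibleP G T x) :
    ∑ i : Fin m, cost (ℓseq i)
      ≤ harm (lam - 1) *
        ∑ ℓ ∈ Finset.univ.filter (fun ℓ : Sym2 V => ℓ ∈ links G T), cost ℓ * x ℓ :=
  greedy_cost_le_harmonic_times_LP_general G T hT cost hcost lam hlam m ℓseq hrun x hx

end TwoNCTAP
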